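/- Let n ≥ 1 and let I ⊆ {1,…,n} be nonempty with Σ_{i∈I} i even. Then ξ_I = Σ_{i∈I} H_i is the unique I-canonical element for the integer lattice 𝔍_Spin of Spin(2n+1). Moreover its coordinates are a_j = |I ∩ {j,…,n}|, so that for every 1 ≤ k < n the uniton number r_{ρ_k}(ξ_I) = 2(a_1+⋯+a_k) equals 2|I| + 2|I∩{2,…,n}| + ⋯ + 2|I∩{k,…,n}|, and for the spin representation r_{ρ_n}(ξ_I) = a_1+⋯+a_n equals |I| + |I∩{2,…,n}| + ⋯ + |I∩{n}|. -/
import Mathlib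


/-!
Canonical elements of Spin(2n+1), case Σ_{i∈I} i even.
Work in ℝ^n; coordinates are 1-based: the j-th coordinate of v : Fin n → ℝ
(for 1 ≤ j ≤ n) is v ⟨j-1⟩, i.e. the Fin-index `j` satisfies (j : ℕ) + 1 = (1-based index).
-/

/-- `H_i = E_1 + ⋯ + E_i` for `so(2n+1)` (1-based index `i`). -/
def Hspin (n i : ℕ) : Fin n → ℝ := fun j => if (j : ℕ) + 1 ≤ i then 1 else 0

/-- The integer lattice of `Spin(2n+1)`: integer vectors with even coordinate sum. -/
def JSpin (n : ℕ) : Set (Fin n → ℝ) :=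
  {v | ∃ a : Fin n → ℤ, (∀ j, v j = a j) ∧ Even (∑ j, a j)}

/-- The set of `I`-canonical elements for a lattice `𝔏 ⊆ ℝ^n` with respect to the
duals `H i`: elements `ξ = Σ_{i∈I} n_i H_i` with all `n_i` positive integers, `ξ ∈ 𝔏`,
such that no `ξ' = Σ_{i∈I} n'_i H_i ∈ 𝔏` with positive `n'_i ≤ n_i` differs from `ξ`. -/
def ICanonSet (n : ℕ) (𝔏 : Set (Fin n → ℝ)) (H : ℕ → Fin n → ℝ) (I : Finset ℕ) :
    Set (Fin n → ℝ) :=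
  {ξ | ∃ c : ℕ → ℕ, (∀ i ∈ I, 1 ≤ c i) ∧ ξ = ∑ i ∈ I, c i • H i ∧ ξ ∈ 𝔏 ∧
    ∀ c' : ℕ → ℕ, (∀ i ∈ I, 1 ≤ c' i ∧ c' i ≤ c i) →
      (∑ i ∈ I, c' i • H i) ∈ 𝔏 → (∑ i ∈ I, c' i • H i) = ξ}

/-- Sum of the first `k` (1-based) coordinates of `v`. -/
def partialSum (n : ℕ) (v : Fin n → ℝ) (k : ℕ) : ℝ :=
  ∑ j ∈ Finset.univ.filter (fun j : Fin n => (j : ℕ) + 1 ≤ k), v j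


lemma coordEq (n : ℕ) (I : Finset ℕ) (j : Fin n) :
    (∑ i ∈ I, Hspin n i) j = ((I.filter fun i => (j : ℕ) + 1 ≤ i).card : ℝ) := by
  simp only [Finset.sum_apply, Hspin]
  rw [Finset.sum_boole]

lemma natSumEq (n : ℕ) (I : Finset ℕ) (hI : I ⊆ Finset.Icc 1 n) :
    ∑ j ∈ Finset.range n, (I.filter fun i => j + 1 ≤ i).card = ∑ i ∈ I, i := by
  simp only [Finset.card_filter]
  rw [Finset.sum_comm]
  refine Finset.sum_congr rfl fun i hi => ?_
  have h := Finset.mem_Icc.mp (hI hi)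
  rw [← Finset.card_filter]
  have : (Finset.range n).filter (fun j => j + 1 ≤ i) = Finset.range i := by
    ext j; simp [Finset.mem_range]; omega
  rw [this, Finset.card_range]

lemma memJSpin (n : ℕ) (I : Finset ℕ) (hI : I ⊆ Finset.Icc 1 n)
    (heven : Even (∑ i ∈ I, i)) : (∑ i ∈ I, Hspin n i) ∈ JSpin n := by
  refine ⟨fun j => ((I.filter fun i => (j : ℕ) + 1 ≤ i).card : ℤ),
    fun j => by rw [coordEq]; push_cast; ring, ?_⟩
  have h1 : ∑ j : Fin n, ((I.filter fun i => (j : ℕ) + 1 ≤ i).card : ℤ)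
      = ((∑ j ∈ Finset.range n, (I.filter fun i => j + 1 ≤ i).card : ℕ) : ℤ) := by
    push_cast
    exact (Fin.sum_univ_eq_sum_range (fun m => ((I.filter fun i => m + 1 ≤ i).card : ℤ)) n).symm ▸ rfl
  rw [h1, natSumEq n I hI]
  exact_mod_cast heven

lemma partialSumEq (n : ℕ) (I : Finset ℕ) (k : ℕ) (hk : k ≤ n) :
    (∑ j ∈ Finset.univ.filter (fun j : Fin n => (j : ℕ) + 1 ≤ k), (∑ i ∈ I, Hspin n i) j) =
      ∑ t ∈ Finset.Icc 1 k, ((I.filter fun i => t ≤ i).card : ℝ) := by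
  rw [Finset.sum_filter]
  have h1 : ∀ j : Fin n,
      (if (j : ℕ) + 1 ≤ k then (∑ i ∈ I, Hspin n i) j else 0)
      = (fun m : ℕ => if m + 1 ≤ k then ((I.filter fun i => m + 1 ≤ i).card : ℝ) else 0) (j : ℕ) := by
    intro j; simp only [coordEq]
  rw [Finset.sum_congr rfl (fun j _ => h1 j),
    Fin.sum_univ_eq_sum_range (fun m : ℕ => if m + 1 ≤ k then ((I.filter fun i => m + 1 ≤ i).card : ℝ) else 0) n,
    ← Finset.sum_filter]
  have h2 : (Finset.range n).filter (fun m => m + 1 ≤ k) = Finset.range k := by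
    ext m; simp [Finset.mem_range]; omega
  rw [h2, show Finset.Icc 1 k = Finset.Ico 1 (k+1) by rw [Finset.Ico_add_one_right_eq_Icc],
    Finset.sum_Ico_eq_sum_range]
  simp only [Nat.add_sub_cancel]
  refine Finset.sum_congr rfl fun t _ => ?_
  rw [Nat.add_comm]

/-- If `Σ_{i∈I} i` is even, `ξ_I = Σ_{i∈I} H_i` is the unique
`I`-canonical element of `Spin(2n+1)`; its coordinates are `a_j = |I ∩ {j,…,n}|`,
its uniton number for `ρ_k` (`1 ≤ k < n`) is `2(a_1+⋯+a_k) = 2Σ_{t=1}^k |I∩{t,…,n}|`,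
and for the spin representation it is `a_1+⋯+a_n = Σ_{t=1}^n |I∩{t,…,n}|`. -/
theorem spin_odd_canonical_even (n : ℕ) (hn : 1 ≤ n) (I : Finset ℕ)
    (hI : I ⊆ Finset.Icc 1 n) (hne : I.Nonempty) (heven : Even (∑ i ∈ I, i)) :
    ICanonSet n (JSpin n) (Hspin n) I = {∑ i ∈ I, Hspin n i} ∧
    (∀ j : Fin n, (∑ i ∈ I, Hspin n i) j = ((I.filter fun i => (j : ℕ) + 1 ≤ i).card : ℝ)) ∧
    (∀ k : ℕ, 1 ≤ k → k < n →
      2 * partialSum n (∑ i ∈ I, Hspin n i) k =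
        2 * ∑ t ∈ Finset.Icc 1 k, ((I.filter fun i => t ≤ i).card : ℝ)) ∧
    partialSum n (∑ i ∈ I, Hspin n i) n =
      ∑ t ∈ Finset.Icc 1 n, ((I.filter fun i => t ≤ i).card : ℝ) := by
  have hmem := memJSpin n I hI heven
  refine ⟨?_, fun j => coordEq n I j,
    fun k _ hkn => by rw [partialSum, partialSumEq n I k hkn.le],
    by rw [partialSum, partialSumEq n I n le_rfl]⟩
  ext ξ
  simp only [Set.mem_singleton_iff, ICanonSet, Set.mem_setOf_eq]
  constructor
  · rintro ⟨c, hc1, hξ, -, hmin⟩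
    have h1 := hmin (fun _ => 1) (fun i hi => ⟨le_refl 1, hc1 i hi⟩)
      (by simpa using hmem)
    simpa using h1.symm
  · rintro rfl
    refine ⟨fun _ => 1, fun i _ => le_refl 1, by simp, hmem, ?_⟩
    intro c' hc' _
    refine Finset.sum_congr rfl fun i hi => ?_
    have h := hc' i hi
    have : c' i = 1 := le_antisymm h.2 h.1
    simp [this]
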